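/- For every β ∈ {0, 1, …, N}, Σ_{γ=0}^N C(γ)·ψ₁(hβ − hγ) = f₁(hβ); that is, the coefficients C solve the Wiener–Hopf type system for the optimal quadrature formula in W₂^{(1,0)}(0,1) with Lagrange multiplier d = 0. -/

import Mathlib

/-- `ψ₁(x) = (sign x)/2 · (eˣ − e⁻ˣ)/2`, with `sign 0 = 0`. -/
noncomputable def psi1 (x : ℝ) : ℝ :=
  Real.sign x / 2 * ((Real.exp x - Real.exp (-x)) / 2)

/-- `f₁(t) = (e^t + e^{−t} + e^{1−t} + e^{t−1} − 4)/4`. -/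
noncomputable def f1 (t : ℝ) : ℝ :=
  (Real.exp t + Real.exp (-t) + Real.exp (1 - t) + Real.exp (t - 1) - 4) / 4

/-!
Write `a = (eʰ − 1)/(eʰ + 1) = tanh (h/2)` and `x_γ = hβ − hγ`. The weights `C` are those of the
trapezoidal rule, `Σ C(γ) g(γ) = a Σ_{γ<N} (g(γ) + g(γ+1))`. Since `ψ₁(x) = sinh |x| / 2` has the
primitive `Φ(x) = sign x · (cosh x − 1)/2`, the identity
`tanh ((x − y)/2) (sinh x + sinh y) = cosh x − cosh y` makes each trapezoid exact,
`a (ψ₁(x_γ) + ψ₁(x_{γ+1})) = Φ(x_γ) − Φ(x_{γ+1})`, as long as `x_γ` and `x_{γ+1}` lie on the same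
side of `0`, which holds on the grid. The sum telescopes to `Φ(hβ) − Φ(hβ − 1) = f₁(hβ)`.
-/

open Finset Real

lemma tanh_half_eq (h : ℝ) : tanh (h / 2) = (exp h - 1) / (exp h + 1) := by
  have hexp : exp h = exp (h / 2) * exp (h / 2) := by rw [← exp_add, add_halves]
  rw [tanh_eq, exp_neg, hexp]
  field_simp

lemma tanh_half_sub_mul_sinh_add_sinh (x y : ℝ) :
    tanh ((x - y) / 2) * (sinh x + sinh y) = cosh x - cosh y := by
  obtain ⟨s, d, rfl, rfl⟩ : ∃ s d : ℝ, x = s + d ∧ y = s - d :=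
    ⟨(x + y) / 2, (x - y) / 2, by ring, by ring⟩
  have hd : (s + d - (s - d)) / 2 = d := by ring
  have hcosh : cosh d ≠ 0 := (cosh_pos d).ne'
  rw [hd, tanh_eq_sinh_div_cosh, sinh_add, sinh_sub, cosh_add, cosh_sub]
  field_simp
  ring

lemma psi1_of_nonneg {x : ℝ} (hx : 0 ≤ x) : psi1 x = sinh x / 2 := by
  rcases hx.eq_or_lt with rfl | hx
  · simp [psi1]
  · rw [psi1, Real.sign_of_pos hx, sinh_eq]; ring

lemma psi1_of_nonpos {x : ℝ} (hx : x ≤ 0) : psi1 x = -sinh x / 2 := by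
  rcases hx.eq_or_lt with rfl | hx
  · simp [psi1]
  · rw [psi1, Real.sign_of_neg hx, sinh_eq]; ring

noncomputable def psi1Primitive (x : ℝ) : ℝ :=
  Real.sign x * (cosh x - 1) / 2

lemma psi1Primitive_of_nonneg {x : ℝ} (hx : 0 ≤ x) : psi1Primitive x = (cosh x - 1) / 2 := by
  rcases hx.eq_or_lt with rfl | hx
  · simp [psi1Primitive]
  · rw [psi1Primitive, Real.sign_of_pos hx, one_mul]

lemma psi1Primitive_of_nonpos {x : ℝ} (hx : x ≤ 0) : psi1Primitive x = -(cosh x - 1) / 2 := by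
  rcases hx.eq_or_lt with rfl | hx
  · simp [psi1Primitive]
  · rw [psi1Primitive, Real.sign_of_neg hx, neg_one_mul]

lemma tanh_half_sub_mul_psi1_add_psi1 {x y : ℝ} (hxy : 0 ≤ x * y) :
    tanh ((x - y) / 2) * (psi1 x + psi1 y) = psi1Primitive x - psi1Primitive y := by
  have key := tanh_half_sub_mul_sinh_add_sinh x y
  rcases mul_nonneg_iff.mp hxy with ⟨hx, hy⟩ | ⟨hx, hy⟩
  · rw [psi1_of_nonneg hx, psi1_of_nonneg hy, psi1Primitive_of_nonneg hx,
      psi1Primitive_of_nonneg hy]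
    linear_combination key / 2
  · rw [psi1_of_nonpos hx, psi1_of_nonpos hy, psi1Primitive_of_nonpos hx,
      psi1Primitive_of_nonpos hy]
    linear_combination -key / 2

lemma f1_eq_psi1Primitive_sub {t : ℝ} (h0 : 0 ≤ t) (h1 : t ≤ 1) :
    f1 t = psi1Primitive t - psi1Primitive (t - 1) := by
  rw [psi1Primitive_of_nonneg h0, psi1Primitive_of_nonpos (by linarith), f1, cosh_eq, cosh_eq,
    neg_sub t 1]
  ring

lemma grid_mul_grid_succ_nonneg (h : ℝ) (β γ : ℕ) :
    0 ≤ (h * β - h * γ) * (h * β - h * (γ + 1 : ℕ)) := by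
  have hconsec : (0 : ℝ) ≤ ((β : ℝ) - γ) * (β - γ - 1) := by
    rcases Nat.lt_or_ge γ β with hγ | hγ
    · have : (γ : ℝ) + 1 ≤ β := by exact_mod_cast hγ
      nlinarith
    · have : (β : ℝ) ≤ γ := by exact_mod_cast hγ
      nlinarith
  calc (0 : ℝ) ≤ h ^ 2 * (((β : ℝ) - γ) * (β - γ - 1)) := by positivity
    _ = _ := by push_cast; ring

lemma tanh_half_mul_psi1_add_psi1_grid (h : ℝ) (β γ : ℕ) :
    tanh (h / 2) * (psi1 (h * β - h * γ) + psi1 (h * β - h * (γ + 1 : ℕ))) =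
      psi1Primitive (h * β - h * γ) - psi1Primitive (h * β - h * (γ + 1 : ℕ)) := by
  have hsub : (h * β - h * γ - (h * β - h * (γ + 1 : ℕ))) / 2 = h / 2 := by push_cast; ring
  rw [← hsub]
  exact tanh_half_sub_mul_psi1_add_psi1 (grid_mul_grid_succ_nonneg h β γ)

lemma sum_trapezoid_weights_mul (a : ℝ) (C f : ℕ → ℝ) (M : ℕ) (hC0 : C 0 = a)
    (hCN : C (M + 1) = a) (hCmid : ∀ γ, 1 ≤ γ → γ ≤ M → C γ = 2 * a) :
    ∑ γ ∈ range (M + 2), C γ * f γ = a * ∑ γ ∈ range (M + 1), (f γ + f (γ + 1)) := by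
  have hmid : ∑ γ ∈ range M, C (γ + 1) * f (γ + 1) = 2 * a * ∑ γ ∈ range M, f (γ + 1) := by
    rw [mul_sum]
    exact sum_congr rfl fun γ hγ => by rw [hCmid (γ + 1) (by omega) (by simp at hγ; omega)]
  rw [sum_range_succ', sum_range_succ, hmid, hCN, hC0, sum_add_distrib, sum_range_succ',
    sum_range_succ (fun γ => f (γ + 1))]
  ring

/-- The coefficients `C(0) = C(N) = (e^h − 1)/(e^h + 1)`,
`C(β) = 2(e^h − 1)/(e^h + 1)` for `1 ≤ β ≤ N − 1`, solve the Wiener–Hopf type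
system for the optimal quadrature formula in `W₂^{(1,0)}(0,1)` with Lagrange
multiplier `d = 0`: for every `β ∈ {0,…,N}`,
`Σ_{γ=0}^N C(γ)·ψ₁(hβ − hγ) = f₁(hβ)`. -/
theorem quadrature_W1_wiener_hopf (N : ℕ) (hN : 1 ≤ N) (h : ℝ) (hh : h = 1 / N)
    (C : ℕ → ℝ)
    (hC0 : C 0 = (Real.exp h - 1) / (Real.exp h + 1))
    (hCN : C N = (Real.exp h - 1) / (Real.exp h + 1))
    (hCmid : ∀ β : ℕ, 1 ≤ β → β ≤ N - 1 → C β = 2 * (Real.exp h - 1) / (Real.exp h + 1)) :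
    ∀ β : ℕ, β ≤ N →
      ∑ γ ∈ Finset.range (N + 1), C γ * psi1 (h * β - h * γ) = f1 (h * β) := by
  intro β hβ
  obtain ⟨M, rfl⟩ : ∃ M, N = M + 1 := ⟨N - 1, by omega⟩
  have hhN : h * ((M + 1 : ℕ) : ℝ) = 1 := by rw [hh]; field_simp
  have hpos : 0 < h := by rw [hh]; positivity
  rw [show M + 1 + 1 = M + 2 from rfl, sum_trapezoid_weights_mul _ C _ M hC0 hCN
      (fun γ h1 h2 => (hCmid γ h1 (by omega)).trans (mul_div_assoc _ _ _)),
    ← tanh_half_eq, mul_sum, sum_congr rfl fun γ _ => tanh_half_mul_psi1_add_psi1_grid h β γ,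
    sum_range_sub', hhN, f1_eq_psi1Primitive_sub (by positivity) (by rw [← hhN]; gcongr)]
  simp only [Nat.cast_zero, mul_zero, sub_zero]
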